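/- For every integer a ≥ 3, the genus of S(a) equals Σ_{i=1}^{⌊(a+1)/2⌋} i·C(a+1−i, i) − Σ_{i=0}^{⌊(a−3)/2⌋} (i+2)·C(a−3−i, i), where C(n, m) denotes the binomial coefficient. -/

import Mathlib

/-- The Lucas sequence: l 0 = 2, l 1 = 1, l (n+2) = l (n+1) + l n. -/
def lucas : ℕ → ℕ
  | 0 => 2
  | 1 => 1
  | n + 2 => lucas (n + 1) + lucas n

/-- The modified (monotone) Lucas sequence: l̃ 0 = 1, l̃ 1 = 2, l̃ n = l n for n ≥ 2. -/
def ltil : ℕ → ℕ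
  | 0 => 1
  | 1 => 2
  | n + 2 => lucas (n + 2)

/-- β x : minimal number of summands in a representation of x as a sum of
modified Lucas numbers (with repetitions allowed). -/
noncomputable def beta (x : ℕ) : ℕ :=
  sInf {s : ℕ | ∃ k : ℕ, ∃ b : ℕ → ℕ,
    x = ∑ i ∈ Finset.range (k + 1), b i * ltil i ∧ s = ∑ i ∈ Finset.range (k + 1), b i}

/-- γ x : the greatest k with l̃ k ≤ x (for x ≥ 1). -/
noncomputable def gamma (x : ℕ) : ℕ := sSup {k : ℕ | ltil k ≤ x}

/-- S a : the additive submonoid of ℕ generated by {l_a} ∪ {l_a + l_n : n ∈ ℕ}. -/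
def Sset (a : ℕ) : AddSubmonoid ℕ :=
  AddSubmonoid.closure ({lucas a} ∪ {x : ℕ | ∃ n : ℕ, x = lucas a + lucas n})

/-- T a : the additive submonoid of ℕ generated by {l_a + l_n : n ∈ ℕ}. -/
def Tset (a : ℕ) : AddSubmonoid ℕ :=
  AddSubmonoid.closure {x : ℕ | ∃ n : ℕ, x = lucas a + lucas n}

/-!
Let `L = l_a` and let `g y` be the number of parts in the greedy decomposition of `y` into
modified Lucas numbers `l̃_k`. Adding one part raises `g` by at most one, so `g` is subadditive.
Then `x ∈ S(a)` iff `g (x % L) ≤ x / L`: sufficiency by writing `x % L` greedily and pairing each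
part with a copy of `L`; necessity because `g (z % L) - z / L` is subadditive (a carry past `L`
never increases `g`) and nonpositive on the generators. Hence the residue class of `r` holds
exactly `g r` gaps, and the genus `G a = ∑_{r < L} g r` satisfies
`G (a+2) = G (a+1) + G a + l_a`. The binomial sums obey the same recurrence by Pascal's rule,
the inhomogeneous term coming from `fib (n+1) = ∑ C(n-i, i)` and `l_{n+1} = F_n + F_{n+2}`.
-/

open Finset

lemma lucas_pos (n : ℕ) : 0 < lucas n := by
  induction n using Nat.twoStepInduction with
  | zero => decide
  | one => decide
  | more n _ ih => exact Nat.add_pos_left ih _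

lemma ltil_eq_lucas {n : ℕ} (hn : 2 ≤ n) : ltil n = lucas n := by
  obtain ⟨m, rfl⟩ := Nat.exists_eq_add_of_le' hn
  rfl

lemma ltil_pos (n : ℕ) : 0 < ltil n := by
  match n with
  | 0 | 1 => decide
  | n + 2 => exact lucas_pos _

lemma ltil_add_two {n : ℕ} (hn : n ≠ 1) : ltil (n + 2) = ltil (n + 1) + ltil n := by
  match n, hn with
  | 0, _ | 2, _ => rfl
  | n + 3, _ => rfl

lemma ltil_strictMono : StrictMono ltil := by
  refine strictMono_nat_of_lt_succ fun n => ?_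
  match n with
  | 0 | 1 | 2 => decide
  | n + 3 =>
    rw [ltil_add_two (n := n + 2) (by omega)]
    exact Nat.lt_add_of_pos_right (ltil_pos _)

lemma range_ltil : Set.range ltil = Set.range lucas := by
  ext x
  constructor
  · rintro ⟨j, rfl⟩
    match j with
    | 0 => exact ⟨1, rfl⟩
    | 1 => exact ⟨0, rfl⟩
    | j + 2 => exact ⟨j + 2, rfl⟩
  · rintro ⟨n, rfl⟩
    match n with
    | 0 => exact ⟨1, rfl⟩
    | 1 => exact ⟨0, rfl⟩
    | n + 2 => exact ⟨n + 2, rfl⟩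

def topIdx (y : ℕ) : ℕ := Nat.findGreatest (fun k => ltil k ≤ y) y

lemma ltil_topIdx_le {y : ℕ} (hy : 0 < y) : ltil (topIdx y) ≤ y :=
  Nat.findGreatest_spec (P := fun k => ltil k ≤ y) (Nat.zero_le y) (ltil_pos 0 |>.trans_le hy)

lemma le_topIdx {k y : ℕ} (h : ltil k ≤ y) : k ≤ topIdx y :=
  Nat.le_findGreatest (ltil_strictMono.le_apply.trans h) h

lemma lt_ltil_topIdx_succ (y : ℕ) : y < ltil (topIdx y + 1) :=
  not_le.mp fun h => (le_topIdx h).not_gt (Nat.lt_succ_self _)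

lemma topIdx_eq {k y : ℕ} (h₁ : ltil k ≤ y) (h₂ : y < ltil (k + 1)) : topIdx y = k := by
  refine le_antisymm ?_ (le_topIdx h₁)
  by_contra! h
  have : ltil (k + 1) ≤ ltil (topIdx y) := ltil_strictMono.monotone h
  have := ltil_topIdx_le ((ltil_pos k).trans_le h₁)
  omega

lemma exists_ltil_le_lt_succ {y : ℕ} (hy : 0 < y) : ∃ k, ltil k ≤ y ∧ y < ltil (k + 1) :=
  ⟨topIdx y, ltil_topIdx_le hy, lt_ltil_topIdx_succ y⟩

/-- Each greedy step removes `ltil (topIdx y) ≥ 1`, so `y` units of fuel suffice. -/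
def greedyCountAux : ℕ → ℕ → ℕ
  | 0, _ => 0
  | fuel + 1, y => if y = 0 then 0 else greedyCountAux fuel (y - ltil (topIdx y)) + 1

def greedyCount (y : ℕ) : ℕ := greedyCountAux y y

lemma greedyCountAux_congr {f₁ f₂ y : ℕ} (h₁ : y ≤ f₁) (h₂ : y ≤ f₂) :
    greedyCountAux f₁ y = greedyCountAux f₂ y := by
  induction y using Nat.strong_induction_on generalizing f₁ f₂ with
  | _ y ih =>
  rcases Nat.eq_zero_or_pos y with rfl | hy
  · cases f₁ <;> cases f₂ <;> rfl
  obtain ⟨f₁, rfl⟩ := Nat.exists_eq_add_of_le' (hy.trans_le h₁)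
  obtain ⟨f₂, rfl⟩ := Nat.exists_eq_add_of_le' (hy.trans_le h₂)
  have := ltil_pos (topIdx y)
  have := ltil_topIdx_le hy
  simp only [greedyCountAux, hy.ne', if_false]
  rw [ih _ (by omega) (f₁ := f₁) (f₂ := f₂) (by omega) (by omega)]

lemma greedyCount_zero : greedyCount 0 = 0 := rfl

lemma greedyCount_eq_of_le_of_lt {k y : ℕ} (h₁ : ltil k ≤ y) (h₂ : y < ltil (k + 1)) :
    greedyCount y = greedyCount (y - ltil k) + 1 := by
  have hk := ltil_pos k
  obtain ⟨f, rfl⟩ : ∃ f, y = f + 1 := ⟨y - 1, by omega⟩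
  simp only [greedyCount, greedyCountAux, Nat.add_one_ne_zero, if_false, topIdx_eq h₁ h₂]
  rw [greedyCountAux_congr (by omega) le_rfl]

lemma greedyCount_ltil (k : ℕ) : greedyCount (ltil k) = 1 := by
  rw [greedyCount_eq_of_le_of_lt le_rfl (ltil_strictMono k.lt_succ_self), Nat.sub_self,
    greedyCount_zero]

lemma greedyCount_ltil_add {k i : ℕ} (h : ltil k + i < ltil (k + 1)) :
    greedyCount (ltil k + i) = greedyCount i + 1 := by
  rw [greedyCount_eq_of_le_of_lt (Nat.le_add_right _ _) h, Nat.add_sub_cancel_left]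

-- The recurrence of `ltil` fails at `ltil 3 ≠ ltil 2 + ltil 1`, so the case analysis below
-- needs a top index `≥ 5`, i.e. `y ≥ ltil 5 = 11`; smaller values are checked directly.
lemma greedyCount_add_ltil_le_of_lt_eleven :
    ∀ u < 11, ∀ i < 5, u + ltil i < 11 → greedyCount (u + ltil i) ≤ greedyCount u + 1 := by
  decide

lemma greedyCount_add_ltil_sub_le_of_lt {n u i : ℕ} (hn : 2 ≤ n)
    (h₁ : ltil (n + 3) ≤ u + ltil i)
    (ih : ∀ v j, v + ltil j < u + ltil i → greedyCount (v + ltil j) ≤ greedyCount v + 1)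
    (hu : u < ltil (n + 3)) (hi : i ≤ n + 2) :
    greedyCount (u + ltil i - ltil (n + 3)) ≤ greedyCount u := by
  have r₂ : ltil (n + 3) = ltil (n + 2) + ltil (n + 1) := ltil_add_two (by omega)
  have r₁ : ltil (n + 2) = ltil (n + 1) + ltil n := ltil_add_two (by omega)
  have hpos := ltil_pos (n + 2)
  by_cases hu' : ltil (n + 2) ≤ u
  · rw [greedyCount_eq_of_le_of_lt hu' hu]
    rcases (show i ≤ n ∨ i = n + 1 ∨ i = n + 2 by omega) with hi | rfl | rfl
    · -- `w = u - ltil (n + 2) + ltil i` has top index `n + 1` and the same greedy remainder.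
      have hin : ltil i ≤ ltil n := ltil_strictMono.monotone hi
      have hw : greedyCount (u - ltil (n + 2) + ltil i) =
          greedyCount (u + ltil i - ltil (n + 3)) + 1 := by
        rw [greedyCount_eq_of_le_of_lt (k := n + 1) (by omega)
          (show _ < ltil (n + 2) by omega)]
        congr 2
        omega
      have := ih _ _ (show u - ltil (n + 2) + ltil i < u + ltil i by omega)
      omega
    · rw [show u + ltil (n + 1) - ltil (n + 3) = u - ltil (n + 2) by omega]
      exact Nat.le_succ _
    · rw [show u + ltil (n + 2) - ltil (n + 3) = u - ltil (n + 2) + ltil n by omega]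
      exact ih _ _ (by omega)
  · have hi : i = n + 2 := by
      by_contra hi
      have : ltil i ≤ ltil (n + 1) := ltil_strictMono.monotone (by omega)
      omega
    subst hi
    rw [greedyCount_eq_of_le_of_lt (k := n + 1) (by omega) (show u < ltil (n + 2) by omega),
      show u + ltil (n + 2) - ltil (n + 3) = u - ltil (n + 1) by omega]
    exact Nat.le_succ _

lemma greedyCount_add_ltil_le_step {n u i : ℕ} (hn : 2 ≤ n)
    (h₁ : ltil (n + 3) ≤ u + ltil i) (h₂ : u + ltil i < ltil (n + 4))
    (ih : ∀ v j, v + ltil j < u + ltil i → greedyCount (v + ltil j) ≤ greedyCount v + 1) :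
    greedyCount (u + ltil i) ≤ greedyCount u + 1 := by
  have r₃ : ltil (n + 4) = ltil (n + 3) + ltil (n + 2) := ltil_add_two (by omega)
  rw [greedyCount_eq_of_le_of_lt h₁ h₂, Nat.add_le_add_iff_right]
  have hi : i < n + 4 := ltil_strictMono.lt_iff_lt.mp (by omega)
  rcases (Nat.lt_succ_iff.mp hi).eq_or_lt with rfl | hi
  · simp
  by_cases hu : ltil (n + 3) ≤ u
  · have hi' : ltil i ≤ ltil (n + 2) := ltil_strictMono.monotone (by omega)
    rw [greedyCount_eq_of_le_of_lt hu (show u < ltil (n + 4) by omega),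
      show u + ltil i - ltil (n + 3) = u - ltil (n + 3) + ltil i by omega]
    exact ih _ _ (by have := ltil_pos (n + 3); omega)
  · exact greedyCount_add_ltil_sub_le_of_lt hn h₁ ih (by omega) (by omega)

theorem greedyCount_add_ltil_le (u i : ℕ) : greedyCount (u + ltil i) ≤ greedyCount u + 1 := by
  suffices ∀ y u i, u + ltil i = y → greedyCount (u + ltil i) ≤ greedyCount u + 1 from
    this _ u i rfl
  intro y
  induction y using Nat.strong_induction_on with
  | _ y ih =>
  rintro u i rfl
  have h5 : ltil 5 = 11 := rfl
  by_cases hsmall : u + ltil i < 11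
  · exact greedyCount_add_ltil_le_of_lt_eleven u (by omega) i
      (ltil_strictMono.lt_iff_lt.mp (by omega)) hsmall
  obtain ⟨K, hK₁, hK₂⟩ := exists_ltil_le_lt_succ (show 0 < u + ltil i by omega)
  have hK : 5 < K + 1 := ltil_strictMono.lt_iff_lt.mp (by omega)
  obtain ⟨n, rfl⟩ : ∃ n, K = n + 3 := ⟨K - 3, by omega⟩
  exact greedyCount_add_ltil_le_step (by omega) hK₁ hK₂ fun v j hv => ih _ hv v j rfl

theorem greedyCount_add_le (u v : ℕ) : greedyCount (u + v) ≤ greedyCount u + greedyCount v := by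
  induction v using Nat.strong_induction_on generalizing u with
  | _ v ih =>
  rcases Nat.eq_zero_or_pos v with rfl | hv
  · simp [greedyCount_zero]
  obtain ⟨k, hk₁, hk₂⟩ := exists_ltil_le_lt_succ hv
  have := ltil_pos k
  calc greedyCount (u + v) = greedyCount (u + (v - ltil k) + ltil k) := by
        congr 1; omega
    _ ≤ greedyCount (u + (v - ltil k)) + 1 := greedyCount_add_ltil_le _ _
    _ ≤ greedyCount u + greedyCount (v - ltil k) + 1 := by gcongr; exact ih _ (by omega) u
    _ = greedyCount u + greedyCount v := by rw [greedyCount_eq_of_le_of_lt hk₁ hk₂, add_assoc]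

lemma greedyCount_sub_ltil_le {k z : ℕ} (hk : 3 ≤ k) (h₁ : ltil k ≤ z) (h₂ : z < ltil (k + 2)) :
    greedyCount (z - ltil k) ≤ greedyCount z := by
  by_cases hz : z < ltil (k + 1)
  · rw [greedyCount_eq_of_le_of_lt h₁ hz]
    exact Nat.le_succ _
  · have r : ltil (k + 1) = ltil k + ltil (k - 1) := by
      obtain ⟨j, rfl⟩ : ∃ j, k = j + 1 := ⟨k - 1, by omega⟩
      exact ltil_add_two (by omega)
    rw [greedyCount_eq_of_le_of_lt (not_lt.mp hz) h₂,
      show z - ltil k = z - ltil (k + 1) + ltil (k - 1) by omega]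
    exact greedyCount_add_ltil_le _ _

-- By `mem_Sset_iff`, `Sset a = {x | excess (lucas a) x ≤ 0}`.
def excess (L z : ℕ) : ℤ := greedyCount (z % L) - (z / L : ℕ)

lemma excess_of_lt {L z : ℕ} (h : z < L) : excess L z = greedyCount z := by
  simp [excess, Nat.mod_eq_of_lt h, Nat.div_eq_of_lt h]

lemma excess_self {L : ℕ} (hL : 0 < L) : excess L L = -1 := by
  simp [excess, Nat.div_self hL, greedyCount_zero]

lemma excess_add_le {k : ℕ} (hk : 3 ≤ k) (z w : ℕ) :
    excess (ltil k) (z + w) ≤ excess (ltil k) z + excess (ltil k) w := by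
  have hL := ltil_pos k
  have hz := Nat.mod_lt z hL
  have hw := Nat.mod_lt w hL
  have hsub := greedyCount_add_le (z % ltil k) (w % ltil k)
  unfold excess
  by_cases hc : z % ltil k + w % ltil k < ltil k
  · rw [Nat.add_mod_of_add_mod_lt hc, Nat.add_div_eq_of_add_mod_lt hc]
    push_cast
    omega
  · rw [not_lt] at hc
    have hmod := Nat.add_mod_add_of_le_add_mod hc
    have r : ltil (k + 2) = ltil (k + 1) + ltil k := ltil_add_two (by omega)
    have : ltil k < ltil (k + 1) := ltil_strictMono k.lt_succ_self
    have hdrop := greedyCount_sub_ltil_le hk hc (by omega)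
    rw [Nat.add_div_eq_of_le_mod_add_mod hc hL,
      show (z + w) % ltil k = z % ltil k + w % ltil k - ltil k by omega]
    push_cast
    omega

lemma excess_ltil_add_nonpos {k : ℕ} (hk : 3 ≤ k) (n : ℕ) : excess (ltil k) (ltil (k + n)) ≤ 0 := by
  induction n using Nat.twoStepInduction with
  | zero => simp [excess_self (ltil_pos k)]
  | one =>
    have r : ltil (k + 1) = ltil k + ltil (k - 1) := by
      obtain ⟨j, rfl⟩ : ∃ j, k = j + 1 := ⟨k - 1, by omega⟩
      exact ltil_add_two (by omega)
    have hlt : ltil (k - 1) < ltil k := ltil_strictMono (by omega)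
    have := excess_add_le hk (ltil k) (ltil (k - 1))
    rw [excess_self (ltil_pos k), excess_of_lt hlt, greedyCount_ltil] at this
    rw [r]
    omega
  | more n ih₀ ih₁ =>
    rw [show k + (n + 2) = k + n + 2 by omega, ltil_add_two (by omega)]
    rw [← add_assoc] at ih₁
    exact (excess_add_le hk _ _).trans (by omega)

lemma excess_ltil_le_one {k : ℕ} (hk : 3 ≤ k) (j : ℕ) : excess (ltil k) (ltil j) ≤ 1 := by
  rcases lt_or_ge j k with hj | hj
  · rw [excess_of_lt (ltil_strictMono hj), greedyCount_ltil]
    norm_num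
  · obtain ⟨n, rfl⟩ := Nat.exists_eq_add_of_le hj
    exact (excess_ltil_add_nonpos hk n).trans zero_le_one

lemma excess_nonpos_of_mem_Sset {a x : ℕ} (ha : 3 ≤ a) (hx : x ∈ Sset a) :
    excess (lucas a) x ≤ 0 := by
  have hL : lucas a = ltil a := (ltil_eq_lucas (by omega)).symm
  induction hx using AddSubmonoid.closure_induction with
  | mem z hz =>
    rcases hz with rfl | ⟨n, rfl⟩
    · simp [hL, excess_self (ltil_pos a)]
    · obtain ⟨j, hj⟩ : lucas n ∈ Set.range ltil := range_ltil ▸ Set.mem_range_self n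
      rw [hL, ← hj]
      have := excess_ltil_le_one ha j
      have := excess_self (ltil_pos a)
      exact (excess_add_le ha _ _).trans (by omega)
  | zero => simp [excess, greedyCount_zero]
  | add _ _ _ _ hy hz =>
    rw [hL] at hy hz ⊢
    exact (excess_add_le ha _ _).trans (add_nonpos hy hz)

lemma add_mem_Sset_of_greedyCount_le {a m y : ℕ} (h : greedyCount y ≤ m) :
    m * lucas a + y ∈ Sset a := by
  induction y using Nat.strong_induction_on generalizing m with
  | _ y ih =>
  have hgen : ∀ {z}, z ∈ ({lucas a} ∪ {x | ∃ n, x = lucas a + lucas n} : Set ℕ) → z ∈ Sset a :=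
    fun hz => AddSubmonoid.subset_closure hz
  rcases Nat.eq_zero_or_pos y with rfl | hy
  · rw [Nat.add_zero, ← smul_eq_mul]
    exact nsmul_mem (hgen (Or.inl rfl)) m
  obtain ⟨k, hk₁, hk₂⟩ := exists_ltil_le_lt_succ hy
  obtain ⟨n, hn⟩ : ltil k ∈ Set.range lucas := range_ltil ▸ Set.mem_range_self k
  rw [greedyCount_eq_of_le_of_lt hk₁ hk₂] at h
  obtain ⟨m, rfl⟩ : ∃ m', m = m' + 1 := ⟨m - 1, by omega⟩
  have hrest : m * lucas a + (y - ltil k) ∈ Sset a :=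
    ih _ (by have := ltil_pos k; omega) (by omega)
  rw [show (m + 1) * lucas a + y = (m * lucas a + (y - ltil k)) + (lucas a + lucas n) by
    rw [hn, add_mul, one_mul]; omega]
  exact add_mem hrest (hgen (Or.inr ⟨n, rfl⟩))

theorem mem_Sset_iff {a x : ℕ} (ha : 3 ≤ a) :
    x ∈ Sset a ↔ greedyCount (x % lucas a) ≤ x / lucas a := by
  refine ⟨fun hx => ?_, fun h => Nat.div_add_mod' x (lucas a) ▸ add_mem_Sset_of_greedyCount_le h⟩
  have := excess_nonpos_of_mem_Sset ha hx
  unfold excess at this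
  omega

lemma ncard_setOf_div_lt {L : ℕ} (hL : 0 < L) (f : ℕ → ℕ) :
    {x | x / L < f (x % L)}.ncard = ∑ r ∈ range L, f r := by
  have hmod {r q : ℕ} (hr : r < L) : (r + q * L) % L = r ∧ (r + q * L) / L = q := by
    rw [Nat.add_mul_mod_self_right, Nat.mod_eq_of_lt hr, Nat.add_mul_div_right _ _ hL,
      Nat.div_eq_of_lt hr, zero_add]
    exact ⟨rfl, rfl⟩
  have hset : {x | x / L < f (x % L)} =
      (fun p : (_ : ℕ) × ℕ => p.1 + p.2 * L) '' ↑((range L).sigma fun r => range (f r)) := by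
    ext x
    simp only [Set.mem_ofPred_eq, Set.mem_image, Finset.coe_sigma, Set.mem_sigma_iff,
      Finset.coe_range, Set.mem_Iio, Sigma.exists]
    constructor
    · exact fun hx => ⟨x % L, x / L, ⟨Nat.mod_lt x hL, hx⟩, Nat.mod_add_div' x L⟩
    · rintro ⟨r, q, ⟨hr, hq⟩, rfl⟩
      rwa [(hmod hr).1, (hmod hr).2]
  have hinj : Set.InjOn (fun p : (_ : ℕ) × ℕ => p.1 + p.2 * L)
      ↑((range L).sigma fun r => range (f r)) := by
    rintro ⟨r₁, q₁⟩ h₁ ⟨r₂, q₂⟩ h₂ (h : r₁ + q₁ * L = r₂ + q₂ * L)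
    simp only [Finset.coe_sigma, Set.mem_sigma_iff, Finset.coe_range, Set.mem_Iio] at h₁ h₂
    have e₁ := hmod (q := q₁) h₁.1
    have e₂ := hmod (q := q₂) h₂.1
    rw [h] at e₁
    obtain ⟨rfl, rfl⟩ : r₁ = r₂ ∧ q₁ = q₂ := ⟨e₁.1.symm.trans e₂.1, e₁.2.symm.trans e₂.2⟩
    rfl
  rw [hset, hinj.ncard_image, Set.ncard_coe_finset, Finset.card_sigma]
  simp

def genusSum (a : ℕ) : ℕ := ∑ r ∈ range (lucas a), greedyCount r

theorem ncard_notMem_Sset {a : ℕ} (ha : 3 ≤ a) : {x | x ∉ Sset a}.ncard = genusSum a := by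
  have hset : {x | x ∉ Sset a} = {x | x / lucas a < greedyCount (x % lucas a)} := by
    ext x
    simp [mem_Sset_iff ha]
  rw [hset, ncard_setOf_div_lt (lucas_pos a), genusSum]

lemma genusSum_add_two {a : ℕ} (ha : 1 ≤ a) :
    genusSum (a + 2) = genusSum (a + 1) + genusSum a + lucas a := by
  have hshift : ∀ i ∈ range (lucas a), greedyCount (lucas (a + 1) + i) = greedyCount i + 1 := by
    intro i hi
    have h₁ : ltil (a + 1) = lucas (a + 1) := ltil_eq_lucas (by omega)
    have h₂ : ltil (a + 2) = lucas (a + 1) + lucas a := ltil_eq_lucas (by omega)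
    rw [← h₁]
    exact greedyCount_ltil_add (show _ < ltil (a + 2) by rw [mem_range] at hi; omega)
  simp only [genusSum]
  rw [show lucas (a + 2) = lucas (a + 1) + lucas a from rfl, sum_range_add,
    sum_congr rfl hshift, sum_add_distrib, sum_const, card_range, smul_eq_mul, mul_one, add_assoc]

lemma lucas_succ_eq_fib_add_fib (n : ℕ) : lucas (n + 1) = Nat.fib n + Nat.fib (n + 2) := by
  induction n using Nat.twoStepInduction with
  | zero => rfl
  | one => rfl
  | more n ih₀ ih₁ =>
    rw [show lucas (n + 2 + 1) = lucas (n + 1 + 1) + lucas (n + 1) from rfl, ih₀, ih₁]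
    simp only [Nat.fib_add_two]
    ring

def diagSum (g : ℕ → ℤ) (m : ℕ) : ℤ := ∑ p ∈ antidiagonal m, g p.1 * (p.2.choose p.1 : ℤ)

lemma diagSum_add_two (g : ℕ → ℤ) (m : ℕ) :
    diagSum g (m + 2) = diagSum g (m + 1) + diagSum (fun i => g (i + 1)) m := by
  simp only [diagSum]
  rw [Nat.sum_antidiagonal_succ', Nat.sum_antidiagonal_succ, Nat.sum_antidiagonal_succ]
  simp only [Nat.choose_zero_succ, Nat.choose_zero_right, Nat.choose_succ_succ, Nat.cast_zero,
    Nat.cast_one, Nat.cast_add, mul_zero, mul_one, mul_add, sum_add_distrib, zero_add]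
  ring

lemma diagSum_one (m : ℕ) : diagSum (fun _ => 1) m = Nat.fib (m + 1) := by
  rw [Nat.fib_succ_eq_sum_choose, ← Nat.sum_antidiagonal_swap]
  simp [diagSum]

lemma diagSum_add_two_of_succ {g : ℕ → ℤ} (hg : ∀ i, g (i + 1) = g i + 1) (m : ℕ) :
    diagSum g (m + 2) = diagSum g (m + 1) + diagSum g m + Nat.fib (m + 1) := by
  rw [diagSum_add_two, ← diagSum_one, add_assoc]
  simp only [diagSum, hg, add_mul, one_mul, sum_add_distrib]

lemma diagSum_eq_sum_Icc {g : ℕ → ℤ} {k : ℕ} (hg : ∀ i < k, g i = 0) (m : ℕ) :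
    diagSum g m = ∑ i ∈ Icc k (m / 2), g i * ((m - i).choose i : ℤ) := by
  rw [diagSum, Nat.sum_antidiagonal_eq_sum_range_succ (fun i j => g i * (j.choose i : ℤ))]
  symm
  apply sum_subset
  · intro i hi
    simp only [mem_Icc, mem_range] at hi ⊢
    omega
  · intro i _ hi
    simp only [mem_Icc, not_and_or, not_le] at hi
    rcases hi with hi | hi
    · simp [hg i hi]
    · simp [Nat.choose_eq_zero_of_lt (show m - i < i by omega)]

theorem genusSum_eq_diagSum (b : ℕ) :
    (genusSum (b + 3) : ℤ) = diagSum (fun i => i) (b + 4) - diagSum (fun i => i + 2) b := by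
  induction b using Nat.twoStepInduction with
  | zero => decide
  | one => decide
  | more b ih₀ ih₁ =>
    have hG := genusSum_add_two (a := b + 3) (by omega)
    have hA := diagSum_add_two_of_succ (g := fun i => (i : ℤ)) (by simp) (b + 4)
    have hD := diagSum_add_two_of_succ (g := fun i => (i : ℤ) + 2) (by intro i; push_cast; ring) b
    have hL : (lucas (b + 3) : ℤ) = Nat.fib (b + 2) + Nat.fib (b + 4) := by
      exact_mod_cast lucas_succ_eq_fib_add_fib (b + 2)
    have hF₃ : (Nat.fib (b + 3) : ℤ) = Nat.fib (b + 1) + Nat.fib (b + 2) := by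
      exact_mod_cast Nat.fib_add_two
    have hF₅ : (Nat.fib (b + 5) : ℤ) = Nat.fib (b + 3) + Nat.fib (b + 4) := by
      exact_mod_cast Nat.fib_add_two
    rw [show b + 2 + 3 = b + 3 + 2 by rfl, hG, show b + 2 + 4 = b + 4 + 2 by rfl, hA, hD]
    push_cast
    linear_combination ih₀ + ih₁ + hL - hF₅ - hF₃

theorem genus_S_binomial (a : ℕ) (ha : 3 ≤ a) :
    ({x : ℕ | x ∉ Sset a}.ncard : ℤ) =
      (∑ i ∈ Finset.Icc 1 ((a + 1) / 2), (i : ℤ) * (Nat.choose (a + 1 - i) i : ℤ)) -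
      (∑ i ∈ Finset.Icc 0 ((a - 3) / 2), ((i : ℤ) + 2) * (Nat.choose (a - 3 - i) i : ℤ)) := by
  obtain ⟨b, rfl⟩ : ∃ b, a = b + 3 := ⟨a - 3, by omega⟩
  rw [ncard_notMem_Sset ha, genusSum_eq_diagSum, Nat.add_sub_cancel,
    diagSum_eq_sum_Icc (k := 1) (fun i hi => by simp [Nat.lt_one_iff.mp hi]),
    diagSum_eq_sum_Icc (k := 0) (fun i hi => absurd hi i.not_lt_zero)]
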